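/- arXiv:2112.00877 — 2 statements merged into one kernel-verified Lean document; each statement's English description precedes it below -/
import Mathlib

section
/- Let k ≥ 1, let Γ be a countable type, and let μ : Γ → ℝ^k satisfy μ(γ)_i ≥ 0 for all γ ∈ Γ and all 1 ≤ i ≤ k. Let u ∈ ℝ^k have u_i > 0 for every i, let α ∈ ℝ^k satisfy ⟨α, u⟩ = 1, and let δ > 0 and R > 0 be real numbers. Assume that the abscissa of convergence of the restriction of the function γ ↦ δ·⟨α, μ(γ)⟩ to the subtype {γ ∈ Γ : the Euclidean distance from μ(γ) to the line ℝ·u is at most R} is equal to 1. Then for every index 1 ≤ i ≤ k one has δ ≤ u_i · δ_i, where δ_i is the abscissa of convergence of the function γ ↦ μ(γ)_i; in particular δ ≤ min_{1 ≤ i ≤ k} u_i · δ_i. -/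
open scoped ENNReal InnerProductSpace

/-!
Within distance `R` of the line `ℝ·u`, the linear form `v ↦ vᵢ - uᵢ⟪α, v⟫` (which vanishes on
that line) is bounded, so `μ(γ)ᵢ ≤ uᵢ⟪α, μ γ⟫ + C` on the strip. Hence if `∑ exp(-s μ(γ)ᵢ)`
converges, so does the strip series for `δ⟪α, μ⟫` at exponent `uᵢ s / δ`, and its abscissa `1`
is at most `uᵢ s / δ`.
-/

/-- The abscissa of convergence of a weight function `w : ι → ℝ`: the infimum in `[0,∞]`
of the set of `s ≥ 0` such that `∑ exp(-s · w i)` converges, and `∞` if this set is empty. -/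
noncomputable def abscissa {ι : Type*} (w : ι → ℝ) : ℝ≥0∞ :=
  sInf {x : ℝ≥0∞ | ∃ s : ℝ, 0 ≤ s ∧ Summable (fun i => Real.exp (-s * w i)) ∧
    x = ENNReal.ofReal s}

lemma abs_le_opNorm_mul_infDist {E : Type*} [SeminormedAddCommGroup E] [NormedSpace ℝ E]
    (L : E →L[ℝ] ℝ) {s : Set E} (hs : s.Nonempty) (hL : ∀ y ∈ s, L y = 0) (v : E) :
    |L v| ≤ ‖L‖ * Metric.infDist v s := by
  rcases (norm_nonneg L).eq_or_lt with hL0 | hLpos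
  · simpa [← hL0, ← Real.norm_eq_abs] using L.le_opNorm v
  rw [← div_le_iff₀' hLpos, Metric.le_infDist hs]
  intro y hy
  rw [div_le_iff₀' hLpos, dist_eq_norm, ← Real.norm_eq_abs]
  calc ‖L v‖ = ‖L (v - y)‖ := by rw [map_sub, hL y hy, sub_zero]
    _ ≤ ‖L‖ * ‖v - y‖ := L.le_opNorm _

lemma exists_le_mul_inner_add_of_infDist_le {E : Type*} [NormedAddCommGroup E]
    [InnerProductSpace ℝ E] (ℓ : E →L[ℝ] ℝ) {u α : E} (hα : ⟪α, u⟫_ℝ = 1) (R : ℝ) :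
    ∃ C, ∀ v, Metric.infDist v (Set.range fun t : ℝ => t • u) ≤ R →
      ℓ v ≤ ℓ u * ⟪α, v⟫_ℝ + C := by
  set L : E →L[ℝ] ℝ := ℓ - ℓ u • innerSL ℝ α
  have hL : ∀ y ∈ Set.range fun t : ℝ => t • u, L y = 0 := by
    rintro _ ⟨t, rfl⟩
    simp [L, hα, mul_comm]
  refine ⟨‖L‖ * R, fun v hv => ?_⟩
  have hLv : ℓ v - ℓ u * ⟪α, v⟫_ℝ ≤ ‖L‖ * Metric.infDist v (Set.range fun t : ℝ => t • u) :=
    (le_abs_self _).trans (abs_le_opNorm_mul_infDist L (Set.range_nonempty _) hL v)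
  linarith [mul_le_mul_of_nonneg_left hv (norm_nonneg L)]

section Abscissa

variable {ι : Type*} {w : ι → ℝ}

lemma abscissa_le_ofReal {s : ℝ} (hs : 0 ≤ s) (h : Summable fun i => Real.exp (-s * w i)) :
    abscissa w ≤ ENNReal.ofReal s :=
  sInf_le ⟨s, hs, h, rfl⟩

lemma le_abscissa {x : ℝ≥0∞}
    (h : ∀ s, 0 ≤ s → (Summable fun i => Real.exp (-s * w i)) → x ≤ ENNReal.ofReal s) :
    x ≤ abscissa w :=
  le_sInf <| by rintro _ ⟨s, hs, hsum, rfl⟩; exact h s hs hsum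

lemma abscissa_comp_le {κ : Type*} {f : κ → ι} (hf : Function.Injective f) :
    abscissa (w ∘ f) ≤ abscissa w :=
  le_abscissa fun _ hs hsum => abscissa_le_ofReal hs (hsum.comp_injective hf)

lemma summable_exp_of_le_mul_add {w' : ι → ℝ} {c C s : ℝ} (hs : 0 ≤ s)
    (hw : ∀ i, w i ≤ c * w' i + C) (h : Summable fun i => Real.exp (-s * w i)) :
    Summable fun i => Real.exp (-(c * s) * w' i) := by
  refine .of_nonneg_of_le (fun _ => (Real.exp_pos _).le) (fun i => ?_)
    (h.mul_left (Real.exp (s * C)))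
  rw [← Real.exp_add, Real.exp_le_exp]
  linarith [mul_le_mul_of_nonneg_left (hw i) hs]

lemma abscissa_le_mul_abscissa {w' : ι → ℝ} {c C : ℝ} (hc : 0 < c)
    (hw : ∀ i, w i ≤ c * w' i + C) : abscissa w' ≤ ENNReal.ofReal c * abscissa w := by
  have hc0 : ENNReal.ofReal c ≠ 0 := ENNReal.ofReal_ne_zero_iff.mpr hc
  rw [mul_comm, ← ENNReal.div_le_iff hc0 ENNReal.ofReal_ne_top]
  refine le_abscissa fun s hs hsum => ?_
  rw [ENNReal.div_le_iff hc0 ENNReal.ofReal_ne_top, ← ENNReal.ofReal_mul' hc.le, mul_comm]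
  exact abscissa_le_ofReal (by positivity) (summable_exp_of_le_mul_add hs hw hsum)

end Abscissa

theorem stmt0_general (k : ℕ) (Γ : Type*)
    (μ : Γ → EuclideanSpace ℝ (Fin k))
    (u : EuclideanSpace ℝ (Fin k)) (hu : ∀ i, 0 < u i)
    (α : EuclideanSpace ℝ (Fin k)) (hα : ⟪α, u⟫_ℝ = 1)
    (δ R : ℝ) (hδ : 0 < δ)
    (hstrip : abscissa
      (fun γ : {γ : Γ // Metric.infDist (μ γ) (Set.range fun t : ℝ => t • u) ≤ R} =>
        δ * ⟪α, μ γ.1⟫_ℝ) = 1) :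
    (∀ i : Fin k,
      ENNReal.ofReal δ ≤ ENNReal.ofReal (u i) * abscissa (fun γ => μ γ i)) ∧
    ENNReal.ofReal δ ≤ ⨅ i : Fin k, ENNReal.ofReal (u i) * abscissa (fun γ => μ γ i) := by
  have coord (i : Fin k) :
      ENNReal.ofReal δ ≤ ENNReal.ofReal (u i) * abscissa (fun γ => μ γ i) := by
    obtain ⟨C, hC⟩ := exists_le_mul_inner_add_of_infDist_le (EuclideanSpace.proj i) hα R
    have hcomp : ∀ γ : {γ : Γ // Metric.infDist (μ γ) (Set.range fun t : ℝ => t • u) ≤ R},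
        μ γ.1 i ≤ (u i / δ) * (δ * ⟪α, μ γ.1⟫_ℝ) + C := fun γ => by
      rw [← mul_assoc, div_mul_cancel₀ _ hδ.ne']
      exact hC _ γ.2
    have hone : 1 ≤ ENNReal.ofReal (u i / δ) * abscissa (fun γ => μ γ i) := by
      rw [← hstrip]
      exact (abscissa_le_mul_abscissa (div_pos (hu i) hδ) hcomp).trans
        (mul_le_mul_right (abscissa_comp_le (w := fun γ => μ γ i) Subtype.val_injective) _)
    calc ENNReal.ofReal δ = ENNReal.ofReal δ * 1 := (mul_one _).symm
      _ ≤ ENNReal.ofReal δ * (ENNReal.ofReal (u i / δ) * abscissa (fun γ => μ γ i)) :=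
        mul_le_mul_right hone _
      _ = ENNReal.ofReal (u i) * abscissa (fun γ => μ γ i) := by
        rw [← mul_assoc, ← ENNReal.ofReal_mul hδ.le, mul_div_cancel₀ _ hδ.ne']
  exact ⟨coord, le_iInf coord⟩

/-- Tent property, core inequality: if the abscissa of convergence of `γ ↦ δ·⟨α, μ γ⟩`
restricted to the strip `{γ | dist(μ γ, ℝ·u) ≤ R}` equals `1`, then `δ ≤ uᵢ · δᵢ`
for each coordinate `i`, and in particular `δ ≤ min_i uᵢ · δᵢ`. -/
theorem stmt0 (k : ℕ) (hk : 1 ≤ k) (Γ : Type*) [Countable Γ]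
    (μ : Γ → EuclideanSpace ℝ (Fin k)) (hμ : ∀ γ i, 0 ≤ μ γ i)
    (u : EuclideanSpace ℝ (Fin k)) (hu : ∀ i, 0 < u i)
    (α : EuclideanSpace ℝ (Fin k)) (hα : ⟪α, u⟫_ℝ = 1)
    (δ R : ℝ) (hδ : 0 < δ) (hR : 0 < R)
    (hstrip : abscissa
      (fun γ : {γ : Γ // Metric.infDist (μ γ) (Set.range fun t : ℝ => t • u) ≤ R} =>
        δ * ⟪α, μ γ.1⟫_ℝ) = 1) :
    (∀ i : Fin k,
      ENNReal.ofReal δ ≤ ENNReal.ofReal (u i) * abscissa (fun γ => μ γ i)) ∧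
    ENNReal.ofReal δ ≤ ⨅ i : Fin k, ENNReal.ofReal (u i) * abscissa (fun γ => μ γ i) :=
  stmt0_general k Γ μ u hu α hα δ R hδ hstrip
end

section
/- Let k ≥ 1, d_1, …, d_k > 0 be real numbers, let α ∈ ℝ^k be nonzero, and let u ∈ ℝ^k satisfy ⟨α, u⟩ = 1. Let f : ℝ^k → ℝ be differentiable at u with gradient ∇f(u) a scalar multiple of α. Define T(v) = min_{1 ≤ i ≤ k} d_i · v_i. Suppose that f(v) ≤ T(v) for every v ∈ ℝ^k with ⟨α, v⟩ = 1, and that f(u) = T(u). Then α is a scalar multiple of some standard basis vector e_i of ℝ^k. -/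
open scoped InnerProductSpace

/-! Let `i` be an index at which the tent `T v = min_j d_j v_j` is attained at `u`. On the slice
`⟨α, v⟩ = 1` we have `f v ≤ T v ≤ d_i v_i`, with equality at `u`, so `v ↦ f v - d_i v_i` is
maximal at `u` along every direction `w ⊥ α`. Hence `∇f(u) - d_i e_i = c α - d_i e_i` is
orthogonal to `αᗮ`, i.e. lies in `ℝ α`; since `d_i e_i ≠ 0`, this forces `α ∈ ℝ e_i`. -/

section

variable {E : Type*} [NormedAddCommGroup E] [InnerProductSpace ℝ E] [CompleteSpace E]

theorem HasGradientAt.hasDerivAt_comp_line {f : E → ℝ} {g u : E} (hf : HasGradientAt f g u)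
    (w : E) : HasDerivAt (fun t : ℝ => f (u + t • w)) ⟪g, w⟫_ℝ 0 := by
  have hline : HasDerivAt (fun t : ℝ => u + t • w) w 0 := by
    simpa using ((hasDerivAt_id (0 : ℝ)).smul_const w).const_add u
  have hf' : HasFDerivAt f (InnerProductSpace.toDual ℝ E g) (u + (0 : ℝ) • w) := by
    simpa using hf.hasFDerivAt
  simpa only [Function.comp_def, InnerProductSpace.toDual_apply_apply] using
    hf'.comp_hasDerivAt 0 hline

theorem HasGradientAt.inner_eq_of_le_add {f : E → ℝ} {g a u w : E} (hf : HasGradientAt f g u)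
    (hle : ∀ t : ℝ, f (u + t • w) ≤ f u + t * ⟪a, w⟫_ℝ) : ⟪g, w⟫_ℝ = ⟪a, w⟫_ℝ := by
  have hmax : IsLocalMax (fun t : ℝ => f (u + t • w) - t * ⟪a, w⟫_ℝ) 0 :=
    Filter.Eventually.of_forall fun t => by simpa using hle t
  have hderiv := (hf.hasDerivAt_comp_line w).sub ((hasDerivAt_id (0 : ℝ)).mul_const ⟪a, w⟫_ℝ)
  rw [one_mul] at hderiv
  exact sub_eq_zero.mp (hmax.hasDerivAt_eq_zero hderiv)

end

theorem exists_smul_eq_of_forall_inner_eq_zero {E : Type*} [NormedAddCommGroup E]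
    [InnerProductSpace ℝ E] {α g : E} (h : ∀ w, ⟪α, w⟫_ℝ = 0 → ⟪g, w⟫_ℝ = 0) :
    ∃ s : ℝ, s • α = g := by
  have hg : g ∈ (ℝ ∙ α)ᗮᗮ := fun w hw => by
    rw [real_inner_comm]
    exact h w (Submodule.mem_orthogonal_singleton_iff_inner_right.mp hw)
  rwa [Submodule.orthogonal_orthogonal, Submodule.mem_span_singleton] at hg

theorem stmt1_general (k : ℕ) (hk : 1 ≤ k) (d : Fin k → ℝ) (hd : ∀ i, 0 < d i)
    (α : EuclideanSpace ℝ (Fin k))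
    (u : EuclideanSpace ℝ (Fin k)) (hu : ⟪α, u⟫_ℝ = 1)
    (f : EuclideanSpace ℝ (Fin k) → ℝ)
    (hgrad : ∃ c : ℝ, HasGradientAt f (c • α) u)
    (hle : ∀ v : EuclideanSpace ℝ (Fin k), ⟪α, v⟫_ℝ = 1 → f v ≤ ⨅ i : Fin k, d i * v i)
    (heq : f u = ⨅ i : Fin k, d i * u i) :
    ∃ (i : Fin k) (c : ℝ), α = c • (EuclideanSpace.single i 1) := by
  obtain ⟨c, hgrad⟩ := hgrad
  have : Nonempty (Fin k) := ⟨⟨0, hk⟩⟩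
  obtain ⟨i, hi⟩ := exists_eq_ciInf_of_finite (f := fun i => d i * u i)
  set e := EuclideanSpace.single i (1 : ℝ)
  have hperp : ∀ w, ⟪α, w⟫_ℝ = 0 → ⟪c • α, w⟫_ℝ = ⟪d i • e, w⟫_ℝ := fun w hw =>
    hgrad.inner_eq_of_le_add fun t => calc
      f (u + t • w) ≤ d i * (u + t • w) i :=
        (hle _ (by simp [inner_add_right, inner_smul_right, hw, hu])).trans
          (ciInf_le (Finite.bddBelow_range _) i)
      _ = f u + t * ⟪d i • e, w⟫_ℝ := by
        simp only [PiLp.add_apply, PiLp.smul_apply, smul_eq_mul, heq, ← hi, inner_smul_left,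
          Real.ringHom_apply, EuclideanSpace.inner_single_left, one_mul, e]
        ring
  obtain ⟨s, hs⟩ := exists_smul_eq_of_forall_inner_eq_zero (g := c • α - d i • e)
    fun w hw => by rw [inner_sub_left, hperp w hw, sub_self]
  have hαe : (c - s) • α = d i • e := by rw [sub_smul, hs]; abel
  have hcs : c - s ≠ 0 := by
    rintro h
    rw [h, zero_smul, eq_comm, smul_eq_zero] at hαe
    exact hαe.elim (hd i).ne' (by simp [e])
  exact ⟨i, (c - s)⁻¹ * d i, by rw [mul_smul, ← hαe, inv_smul_smul₀ hcs]⟩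

/-- Equality case of the tent property: if `f` is differentiable at `u` with gradient
parallel to `α`, `f ≤ T` on the affine slice `{v | ⟨α, v⟩ = 1}` where
`T v = min_i dᵢ · vᵢ`, and `f(u) = T(u)`, then `α` is a scalar multiple of one of the
standard basis vectors. -/
theorem stmt1 (k : ℕ) (hk : 1 ≤ k) (d : Fin k → ℝ) (hd : ∀ i, 0 < d i)
    (α : EuclideanSpace ℝ (Fin k)) (hα : α ≠ 0)
    (u : EuclideanSpace ℝ (Fin k)) (hu : ⟪α, u⟫_ℝ = 1)
    (f : EuclideanSpace ℝ (Fin k) → ℝ)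
    (hgrad : ∃ c : ℝ, HasGradientAt f (c • α) u)
    (hle : ∀ v : EuclideanSpace ℝ (Fin k), ⟪α, v⟫_ℝ = 1 → f v ≤ ⨅ i : Fin k, d i * v i)
    (heq : f u = ⨅ i : Fin k, d i * u i) :
    ∃ (i : Fin k) (c : ℝ), α = c • (EuclideanSpace.single i 1) :=
  stmt1_general k hk d hd α u hu f hgrad hle heq
end
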